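/- arXiv:2011.02140 — 5 statements merged into one kernel-verified Lean document; each statement's English description precedes it below -/
import Mathlib

section
/- In a k-edge-connected graph with k odd, no two edge-cuts of size exactly k cross. That is, if δ(A) and δ(B) are both k-edge-cuts, then at least one of the four sets A∩B, A\B, B\A, and the complement of A∪B is empty. -/
/-!
Uncrossing. If `δ(A)` and `δ(B)` are `k`-cuts that cross, the four corner sets are proper and
nonempty, so each has a cut of size at least `k`. Submodularity
`|δ(A ∩ B)| + |δ(A ∪ B)| ≤ |δ(A)| + |δ(B)|` and posimodularity
`|δ(A \ B)| + |δ(B \ A)| ≤ |δ(A)| + |δ(B)|` force `|δ(A ∩ B)| = |δ(A \ B)| = k`. But `δ(A)` is the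
symmetric difference of `δ(A ∩ B)` and `δ(A \ B)`, so `|δ(A)| ≡ |δ(A ∩ B)| + |δ(A \ B)| (mod 2)`,
i.e. `k ≡ 2k`, contradicting the oddness of `k`.
-/

open Finset

/-- The edge-cut `δ(A)`: edges with exactly one endpoint in `A`. -/
def cutset {V E : Type} [Fintype E] [DecidableEq V] (fst snd : E → V) (A : Finset V) :
    Finset E :=
  univ.filter fun e => ¬ ((fst e ∈ A) ↔ (snd e ∈ A))

theorem Finset.card_add_card_le_of_union_subset_of_inter_subset {α : Type*} [DecidableEq α]
    {s t u v : Finset α} (hunion : s ∪ t ⊆ u ∪ v) (hinter : s ∩ t ⊆ u ∩ v) :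
    #s + #t ≤ #u + #v := by
  rw [← card_union_add_card_inter s t, ← card_union_add_card_inter u v]
  exact Nat.add_le_add (card_le_card hunion) (card_le_card hinter)

section Cutset

variable {V E : Type} [Fintype E] [DecidableEq V] (fst snd : E → V)

theorem mem_cutset {A : Finset V} {e : E} :
    e ∈ cutset fst snd A ↔ ¬ ((fst e ∈ A) ↔ (snd e ∈ A)) := by
  simp [cutset]

theorem card_cutset_inter_add_card_cutset_union_le (A B : Finset V) :
    #(cutset fst snd (A ∩ B)) + #(cutset fst snd (A ∪ B)) ≤
      #(cutset fst snd A) + #(cutset fst snd B) := by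
  classical
  apply card_add_card_le_of_union_subset_of_inter_subset <;> intro e <;>
    simp only [mem_union, mem_inter, mem_cutset] <;> tauto

theorem card_cutset_sdiff_add_card_cutset_sdiff_le (A B : Finset V) :
    #(cutset fst snd (A \ B)) + #(cutset fst snd (B \ A)) ≤
      #(cutset fst snd A) + #(cutset fst snd B) := by
  classical
  apply card_add_card_le_of_union_subset_of_inter_subset <;> intro e <;>
    simp only [mem_union, mem_inter, mem_sdiff, mem_cutset] <;> tauto

theorem card_cutset_add_card_cutset_of_disjoint [DecidableEq E] {Y Z : Finset V}
    (hYZ : Disjoint Y Z) :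
    #(cutset fst snd Y) + #(cutset fst snd Z) =
      #(cutset fst snd (Y ∪ Z)) + 2 * #(cutset fst snd Y ∩ cutset fst snd Z) := by
  have hdisj : ∀ v, v ∈ Y → v ∉ Z := fun _ hv => disjoint_left.mp hYZ hv
  have hunion : cutset fst snd Y ∪ cutset fst snd Z =
      cutset fst snd (Y ∪ Z) ∪ (cutset fst snd Y ∩ cutset fst snd Z) := by
    ext e
    have := hdisj (fst e)
    have := hdisj (snd e)
    simp only [mem_union, mem_inter, mem_cutset]
    tauto
  have hcut_disj : Disjoint (cutset fst snd (Y ∪ Z)) (cutset fst snd Y ∩ cutset fst snd Z) := by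
    refine disjoint_left.mpr fun e he he' => ?_
    have := hdisj (fst e)
    have := hdisj (snd e)
    simp only [mem_union, mem_inter, mem_cutset] at he he'
    tauto
  rw [← card_union_add_card_inter, hunion, card_union_of_disjoint hcut_disj]
  ring

variable [Fintype V]

theorem le_card_cutset_of_disjoint {k : ℕ}
    (hconn : ∀ A : Finset V, A.Nonempty → A ≠ univ → k ≤ #(cutset fst snd A))
    {X Y : Finset V} (hX : X.Nonempty) (hY : Y.Nonempty) (hXY : Disjoint X Y) :
    k ≤ #(cutset fst snd X) := by
  refine hconn X hX fun hXuniv => ?_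
  obtain ⟨y, hy⟩ := hY
  exact disjoint_left.mp hXY (hXuniv ▸ mem_univ y) hy

end Cutset

theorem stmt1_general {V E : Type} [Fintype V] [Fintype E] [DecidableEq V]
    (fst snd : E → V) (k : ℕ) (hodd : Odd k)
    (hconn : ∀ A : Finset V, A.Nonempty → A ≠ univ → k ≤ (cutset fst snd A).card)
    (A B : Finset V)
    (hA : (cutset fst snd A).card = k) (hB : (cutset fst snd B).card = k) :
    A ∩ B = ∅ ∨ A \ B = ∅ ∨ B \ A = ∅ ∨ univ \ (A ∪ B) = ∅ := by
  classical
  by_contra! h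
  obtain ⟨hAB, hAmB, hBmA, hout⟩ := h
  have hcut {X Y : Finset V} : X.Nonempty → Y.Nonempty → Disjoint X Y → k ≤ #(cutset fst snd X) :=
    le_card_cutset_of_disjoint fst snd hconn
  have hcut_inter := hcut hAB hout (disjoint_sdiff.mono_left inter_subset_union)
  have hcut_union := hcut (hAB.mono inter_subset_union) hout disjoint_sdiff
  have hcut_AB := hcut hAmB hBmA disjoint_sdiff_sdiff
  have hcut_BA := hcut hBmA hAmB disjoint_sdiff_sdiff.symm
  have hsub := card_cutset_inter_add_card_cutset_union_le fst snd A B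
  have hposi := card_cutset_sdiff_add_card_cutset_sdiff_le fst snd A B
  have hparity := card_cutset_add_card_cutset_of_disjoint fst snd (disjoint_sdiff_inter A B).symm
  rw [union_comm, sdiff_union_inter] at hparity
  obtain ⟨m, rfl⟩ := hodd
  omega

/-- In a `k`-edge-connected graph with `k` odd, no two `k`-edge-cuts cross: if `δ(A)` and
`δ(B)` both have size exactly `k`, then one of `A ∩ B`, `A \ B`, `B \ A`, `V \ (A ∪ B)`
is empty. -/
theorem stmt1 {V E : Type} [Fintype V] [Fintype E] [DecidableEq V]
    (fst snd : E → V) (k : ℕ) (hodd : Odd k) (hpos : 0 < k)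
    (hconn : ∀ A : Finset V, A.Nonempty → A ≠ univ → k ≤ (cutset fst snd A).card)
    (A B : Finset V)
    (hA : (cutset fst snd A).card = k) (hB : (cutset fst snd B).card = k) :
    A ∩ B = ∅ ∨ A \ B = ∅ ∨ B \ A = ∅ ∨ univ \ (A ∪ B) = ∅ :=
  stmt1_general fst snd k hodd hconn A B hA hB
end

section
/- Suppose a graph G has a valid orientation problem decomposed along a 4-edge-cut δ(A): if the graph G₁ obtained by contracting V(G)\A to a single vertex has a valid orientation, and the graph G₂ obtained by contracting A to a single directed vertex (directed according to the orientation of the four cut edges in G₁'s orientation) has a valid orientation extending that directed vertex, then G itself has a valid orientation. -/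
open Finset

/-- Orientation convention: `o e = true` means the edge is directed from `fst e` to `snd e`. -/
def edgeHead {V E : Type} (fst snd : E → V) (o : E → Bool) (e : E) : V :=
  if o e then snd e else fst e

def edgeTail {V E : Type} (fst snd : E → V) (o : E → Bool) (e : E) : V :=
  if o e then fst e else snd e

/-- `indeg(v) − outdeg(v)` as an element of `ℤ₃`. -/
def flowDiff {V E : Type} [Fintype E] [DecidableEq V] (fst snd : E → V) (o : E → Bool)
    (v : V) : ZMod 3 :=
  ((univ.filter fun e => edgeHead fst snd o e = v).card : ZMod 3)
    - ((univ.filter fun e => edgeTail fst snd o e = v).card : ZMod 3)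

lemma flowDiff_congr {V E : Type} [Fintype E] [DecidableEq V] (fst snd : E → V)
    (o o' : E → Bool) (v : V) (h : ∀ e, fst e = v ∨ snd e = v → o e = o' e) :
    flowDiff fst snd o v = flowDiff fst snd o' v := by
  have hH : ∀ e : E, edgeHead fst snd o e = v ↔ edgeHead fst snd o' e = v := by
    intro e
    by_cases ht : fst e = v ∨ snd e = v
    · rw [edgeHead, edgeHead, h e ht]
    · push_neg at ht
      simp only [edgeHead]
      split_ifs <;> simp [ht.1, ht.2]
  have hT : ∀ e : E, edgeTail fst snd o e = v ↔ edgeTail fst snd o' e = v := by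
    intro e
    by_cases ht : fst e = v ∨ snd e = v
    · rw [edgeTail, edgeTail, h e ht]
    · push_neg at ht
      simp only [edgeTail]
      split_ifs <;> simp [ht.1, ht.2]
  unfold flowDiff
  rw [show (univ.filter fun e => edgeHead fst snd o e = v)
        = univ.filter fun e => edgeHead fst snd o' e = v by ext e; simp [hH e],
      show (univ.filter fun e => edgeTail fst snd o e = v)
        = univ.filter fun e => edgeTail fst snd o' e = v by ext e; simp [hT e]]

/-- Gluing along a 4-edge-cut: if `G₁ = G/(V∖A)` has a valid orientation, and for any such
orientation the graph `G₂ = G/A`, with the contracted vertex directed according to the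
orientation of the four cut edges, has a valid orientation extending those directions, then
`G` has a valid orientation. -/
theorem stmt9 {V E : Type} [Fintype V] [Fintype E] [DecidableEq V]
    (fst snd : E → V) (p : V → ZMod 3) (hp : ∑ v, p v = 0)
    (A : Finset V) (hAne : A.Nonempty) (hAprop : A ≠ univ)
    (hcut : (cutset fst snd A).card = 4)
    (h1 : ∃ o1 : E → Bool, ∀ v ∈ A, flowDiff fst snd o1 v = p v)
    (h2 : ∀ o1 : E → Bool, (∀ v ∈ A, flowDiff fst snd o1 v = p v) →
      ∃ o2 : E → Bool, (∀ e ∈ cutset fst snd A, o2 e = o1 e) ∧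
        ∀ v ∉ A, flowDiff fst snd o2 v = p v) :
    ∃ o : E → Bool, ∀ v, flowDiff fst snd o v = p v := by
  classical
  obtain ⟨o1, h1v⟩ := h1
  obtain ⟨o2, ho2cut, h2v⟩ := h2 o1 h1v
  refine ⟨fun e => if fst e ∈ A ∧ snd e ∈ A then o1 e else o2 e, fun v => ?_⟩
  by_cases hv : v ∈ A
  · rw [flowDiff_congr fst snd _ o1 v ?_]
    · exact h1v v hv
    · intro e he
      by_cases hb : fst e ∈ A ∧ snd e ∈ A
      · simp [hb]
      · have hc : e ∈ cutset fst snd A := by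
          simp only [cutset, mem_filter, mem_univ, true_and]
          intro hiff
          rcases he with h' | h'
          · exact hb ⟨h' ▸ hv, hiff.mp (h' ▸ hv)⟩
          · exact hb ⟨hiff.mpr (h' ▸ hv), h' ▸ hv⟩
        simp [hb, ho2cut e hc]
  · rw [flowDiff_congr fst snd _ o2 v ?_]
    · exact h2v v hv
    · intro e he
      have hb : ¬ (fst e ∈ A ∧ snd e ∈ A) := by
        rcases he with h' | h' <;> intro ⟨ha, hs⟩
        · exact hv (h' ▸ ha)
        · exact hv (h' ▸ hs)
      simp [hb]
end

section
/- In the graph of Lemma 'star': let G consist of a degree-3 vertex t, a degree-5 vertex w adjacent to t, and a cycle P = w v₀ v₁ … v_n w with n = 6k, each v_i of degree 4, where d = v_{n/2} has all edges directed out of d, with p(d) = −1, p(v_j) = +1 for all other j ≤ n/2 + 2 and j ≥ n/2 − 2 within distance 2 of d, p(v_j) = +1 for j < n/2 − 2, p(v_j) = −1 for j > n/2 + 2, and p(t) = p(w) = 0. Then for all 0 ≤ j ≤ k, both edges v_{3(k−j)}v_{3(k−j)−1} and v_{3(k−j)}v_{3(k−j)−2} are directed out of v_{3(k−j)} in any valid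 orientation; consequently G has no valid orientation meeting p. -/
open Finset

/-- The edge set (as ordered pairs of vertex labels) of the graph of Lemma `star` with
`n = 6k`: vertices `0, …, 6k` are `v₀, …, v_n`, vertex `6k+1` is `w`, vertex `6k+2` is `t`.
Edges: the cycle `w v₀ v₁ ⋯ v_n w`, the chords `v_i v_{i+2}`, `w v₁`, `w v_{n−1}` (so that
`w = v_{−1} = v_{n+1}`), and `t v₀`, `t v_n`, `t w` (so that `t = v_{−2} = v_{n+2}`). -/
def starPairs (k : ℕ) : Finset (ℕ × ℕ) :=
  ((range (6 * k)).image fun i => (i, i + 1)) ∪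
  ((range (6 * k - 1)).image fun i => (i, i + 2)) ∪
  {(6 * k + 1, 0), (6 * k + 1, 6 * k), (6 * k + 1, 1), (6 * k + 1, 6 * k - 1),
   (6 * k + 2, 0), (6 * k + 2, 6 * k), (6 * k + 2, 6 * k + 1)}

/-- Indegree of vertex `v` under orientation `o` (`o q = true` means `q.1 → q.2`). -/
def starIndeg (k : ℕ) (o : ℕ × ℕ → Bool) (v : ℕ) : ℕ :=
  ((starPairs k).filter fun q => (o q = true ∧ q.2 = v) ∨ (o q = false ∧ q.1 = v)).card

/-- Outdegree of vertex `v` under orientation `o`. -/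
def starOutdeg (k : ℕ) (o : ℕ × ℕ → Bool) (v : ℕ) : ℕ :=
  ((starPairs k).filter fun q => (o q = true ∧ q.1 = v) ∨ (o q = false ∧ q.2 = v)).card

/-- The prescription: `p(d) = −1` for `d = v_{3k}`, `p(v_j) = +1` for other `j ≤ 3k+2`,
`p(v_j) = −1` for `3k+2 < j ≤ 6k`, and `p(t) = p(w) = 0`. -/
def starP (k : ℕ) (j : ℕ) : ZMod 3 :=
  if j = 3 * k then -1 else if j ≤ 3 * k + 2 then 1 else if j ≤ 6 * k then -1 else 0

/-- A valid orientation: all edges at `d = v_{3k}` directed out of `d`, and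
`indeg − outdeg ≡ p (mod 3)` at every vertex. -/
def starValid (k : ℕ) (o : ℕ × ℕ → Bool) : Prop :=
  (∀ q ∈ starPairs k, (q.1 = 3 * k → o q = true) ∧ (q.2 = 3 * k → o q = false)) ∧
  ∀ v : ℕ, ((starIndeg k o v : ZMod 3) - (starOutdeg k o v : ZMod 3)) = starP k v

/-- The edge `v_m v_{m−1}` (which is `v₀ w` when `m = 0`). -/
def starPairA (k m : ℕ) : ℕ × ℕ := if m = 0 then (6 * k + 1, 0) else (m - 1, m)

/-- The edge `v_m v_{m−2}` (which is `v₀ t` when `m = 0`). -/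
def starPairB (k m : ℕ) : ℕ × ℕ := if m = 0 then (6 * k + 2, 0) else (m - 2, m)

lemma exPair (n c x y : ℕ) : (∃ i, i < n ∧ (i = x ∧ i + c = y)) ↔ (x < n ∧ x + c = y) := by
  constructor
  · rintro ⟨i, h1, rfl, h3⟩; exact ⟨h1, h3⟩
  · rintro ⟨h1, h2⟩; exact ⟨x, h1, rfl, h2⟩

lemma mem_starPairs' {k : ℕ} (x y : ℕ) : (x,y) ∈ starPairs k ↔
    (x < 6*k ∧ y = x+1) ∨ (x < 6*k - 1 ∧ y = x+2) ∨
    (x = 6*k+1 ∧ (y = 0 ∨ y = 6*k ∨ y = 1 ∨ y = 6*k-1)) ∨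
    (x = 6*k+2 ∧ (y = 0 ∨ y = 6*k ∨ y = 6*k+1)) := by
  simp [starPairs, Prod.ext_iff, exPair]
  omega

def starC (b : Bool) : ZMod 3 := bif b then 1 else -1

lemma starDeg_eq (k v : ℕ) (o : ℕ × ℕ → Bool) (E : Finset (ℕ × ℕ))
    (hE : (starPairs k).filter (fun q => q.1 = v ∨ q.2 = v) = E) :
    (starIndeg k o v : ZMod 3) - (starOutdeg k o v : ZMod 3) =
      ∑ q ∈ E, ((if (o q = true ∧ q.2 = v) ∨ (o q = false ∧ q.1 = v) then (1:ZMod 3) else 0)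
        - (if (o q = true ∧ q.1 = v) ∨ (o q = false ∧ q.2 = v) then (1:ZMod 3) else 0)) := by
  have key : ∀ (P : ℕ × ℕ → Prop) (_ : DecidablePred P), (∀ q, P q → (q.1 = v ∨ q.2 = v)) →
      ((starPairs k).filter P).card = ∑ q ∈ E, if P q then (1:ℕ) else 0 := by
    intro P _ hP
    rw [← Finset.card_filter]
    congr 1
    rw [← hE, Finset.filter_filter]
    apply Finset.filter_congr
    intro q _
    constructor
    · intro h; exact ⟨hP q h, h⟩
    · intro h; exact h.2
  unfold starIndeg starOutdeg
  rw [key _ inferInstance (by rintro q (⟨_, h⟩ | ⟨_, h⟩) <;> [right; left] <;> exact h),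
      key _ inferInstance (by rintro q (⟨_, h⟩ | ⟨_, h⟩) <;> [left; right] <;> exact h)]
  push_cast
  rw [← Finset.sum_sub_distrib]

lemma term_in (o : ℕ × ℕ → Bool) (v : ℕ) (q : ℕ × ℕ) (h2 : q.2 = v) (h1 : q.1 ≠ v) :
    ((if (o q = true ∧ q.2 = v) ∨ (o q = false ∧ q.1 = v) then (1:ZMod 3) else 0)
      - (if (o q = true ∧ q.1 = v) ∨ (o q = false ∧ q.2 = v) then (1:ZMod 3) else 0))
    = starC (o q) := by
  cases h : o q <;> simp [h, h1, h2, starC]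

lemma term_out (o : ℕ × ℕ → Bool) (v : ℕ) (q : ℕ × ℕ) (h1 : q.1 = v) (h2 : q.2 ≠ v) :
    ((if (o q = true ∧ q.2 = v) ∨ (o q = false ∧ q.1 = v) then (1:ZMod 3) else 0)
      - (if (o q = true ∧ q.1 = v) ∨ (o q = false ∧ q.2 = v) then (1:ZMod 3) else 0))
    = - starC (o q) := by
  cases h : o q <;> simp [h, h1, h2, starC]

lemma filter_incident_int (k a : ℕ) (h : a + 4 ≤ 6*k) :
    (starPairs k).filter (fun q => q.1 = a+2 ∨ q.2 = a+2) =
      {(a+1,a+2), (a+2,a+3), (a,a+2), (a+2,a+4)} := by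
  ext ⟨x,y⟩
  simp [mem_starPairs', Prod.ext_iff]
  omega

lemma filter_incident_v0 (k : ℕ) (hk : 1 ≤ k) :
    (starPairs k).filter (fun q => q.1 = 0 ∨ q.2 = 0) =
      {(0,1), (0,2), (6*k+1,0), (6*k+2,0)} := by
  ext ⟨x,y⟩
  simp [mem_starPairs', Prod.ext_iff]
  omega

lemma filter_incident_v1 (k : ℕ) (hk : 1 ≤ k) :
    (starPairs k).filter (fun q => q.1 = 1 ∨ q.2 = 1) =
      {(0,1), (1,2), (1,3), (6*k+1,1)} := by
  ext ⟨x,y⟩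
  simp [mem_starPairs', Prod.ext_iff]
  omega

lemma filter_incident_vn1 (k : ℕ) (hk : 1 ≤ k) :
    (starPairs k).filter (fun q => q.1 = 6*k-1 ∨ q.2 = 6*k-1) =
      {(6*k-2,6*k-1), (6*k-1,6*k), (6*k-3,6*k-1), (6*k+1,6*k-1)} := by
  ext ⟨x,y⟩
  simp [mem_starPairs', Prod.ext_iff]
  omega

lemma filter_incident_vn (k : ℕ) (hk : 1 ≤ k) :
    (starPairs k).filter (fun q => q.1 = 6*k ∨ q.2 = 6*k) =
      {(6*k-1,6*k), (6*k-2,6*k), (6*k+1,6*k), (6*k+2,6*k)} := by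
  ext ⟨x,y⟩
  simp [mem_starPairs', Prod.ext_iff]
  omega

lemma filter_incident_t (k : ℕ) (hk : 1 ≤ k) :
    (starPairs k).filter (fun q => q.1 = 6*k+2 ∨ q.2 = 6*k+2) =
      {(6*k+2,0), (6*k+2,6*k), (6*k+2,6*k+1)} := by
  ext ⟨x,y⟩
  simp [mem_starPairs', Prod.ext_iff]
  omega


set_option maxHeartbeats 1000000 in
lemma rule_int (k a : ℕ) (h : a + 4 ≤ 6*k) (o : ℕ × ℕ → Bool) (hv : starValid k o) :
    starC (o (a+1,a+2)) - starC (o (a+2,a+3)) + starC (o (a,a+2)) - starC (o (a+2,a+4))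
      = starP k (a+2) := by
  have h0 := hv.2 (a+2)
  rw [starDeg_eq k (a+2) o _ (filter_incident_int k a h)] at h0
  rw [Finset.sum_insert (by simp [Prod.ext_iff]),
      Finset.sum_insert (by simp [Prod.ext_iff]),
      Finset.sum_insert (by simp [Prod.ext_iff]),
      Finset.sum_singleton] at h0
  rw [term_in o (a+2) (a+1,a+2) rfl (by omega),
      term_out o (a+2) (a+2,a+3) rfl (by omega),
      term_in o (a+2) (a,a+2) rfl (by omega),
      term_out o (a+2) (a+2,a+4) rfl (by omega)] at h0
  linear_combination h0

lemma starP_one (k v : ℕ) (h1 : v ≠ 3*k) (h2 : v ≤ 3*k+2) : starP k v = 1 := by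
  unfold starP; rw [if_neg h1, if_pos h2]

lemma starP_negone (k v : ℕ) (h1 : 3*k + 2 < v) (h2 : v ≤ 6*k) : starP k v = -1 := by
  unfold starP; rw [if_neg (by omega), if_neg (by omega), if_pos h2]

lemma rule_v0 (k : ℕ) (hk : 1 ≤ k) (o : ℕ × ℕ → Bool) (hv : starValid k o) :
    - starC (o (0,1)) - starC (o (0,2)) + starC (o (6*k+1,0)) + starC (o (6*k+2,0)) = 1 := by
  have h0 := hv.2 0
  rw [starDeg_eq k 0 o _ (filter_incident_v0 k hk)] at h0
  rw [Finset.sum_insert (by simp [Prod.ext_iff]; try omega),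
      Finset.sum_insert (by simp [Prod.ext_iff]; try omega),
      Finset.sum_insert (by simp [Prod.ext_iff]; try omega),
      Finset.sum_singleton] at h0
  rw [term_out o 0 (0,1) rfl (by omega),
      term_out o 0 (0,2) rfl (by omega),
      term_in o 0 (6*k+1,0) rfl (by omega),
      term_in o 0 (6*k+2,0) rfl (by omega)] at h0
  rw [starP_one k 0 (by omega) (by omega)] at h0
  linear_combination h0

lemma rule_v1 (k : ℕ) (hk : 1 ≤ k) (o : ℕ × ℕ → Bool) (hv : starValid k o) :
    starC (o (0,1)) - starC (o (1,2)) - starC (o (1,3)) + starC (o (6*k+1,1)) = 1 := by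
  have h0 := hv.2 1
  rw [starDeg_eq k 1 o _ (filter_incident_v1 k hk)] at h0
  rw [Finset.sum_insert (by simp [Prod.ext_iff]; try omega),
      Finset.sum_insert (by simp [Prod.ext_iff]; try omega),
      Finset.sum_insert (by simp [Prod.ext_iff]; try omega),
      Finset.sum_singleton] at h0
  rw [term_in o 1 (0,1) rfl (by omega),
      term_out o 1 (1,2) rfl (by omega),
      term_out o 1 (1,3) rfl (by omega),
      term_in o 1 (6*k+1,1) rfl (by omega)] at h0
  rw [starP_one k 1 (by omega) (by omega)] at h0
  linear_combination h0

lemma rule_vn1 (k : ℕ) (hk : 1 ≤ k) (o : ℕ × ℕ → Bool) (hv : starValid k o) :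
    starC (o (6*k-2,6*k-1)) - starC (o (6*k-1,6*k)) + starC (o (6*k-3,6*k-1))
      + starC (o (6*k+1,6*k-1)) = starP k (6*k-1) := by
  have h0 := hv.2 (6*k-1)
  rw [starDeg_eq k (6*k-1) o _ (filter_incident_vn1 k hk)] at h0
  rw [Finset.sum_insert (by simp [Prod.ext_iff]; try omega),
      Finset.sum_insert (by simp [Prod.ext_iff]; try omega),
      Finset.sum_insert (by simp [Prod.ext_iff]; try omega),
      Finset.sum_singleton] at h0
  rw [term_in o (6*k-1) (6*k-2,6*k-1) rfl (by omega),
      term_out o (6*k-1) (6*k-1,6*k) rfl (by omega),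
      term_in o (6*k-1) (6*k-3,6*k-1) rfl (by omega),
      term_in o (6*k-1) (6*k+1,6*k-1) rfl (by omega)] at h0
  linear_combination h0

lemma rule_vn (k : ℕ) (hk : 1 ≤ k) (o : ℕ × ℕ → Bool) (hv : starValid k o) :
    starC (o (6*k-1,6*k)) + starC (o (6*k-2,6*k)) + starC (o (6*k+1,6*k))
      + starC (o (6*k+2,6*k)) = -1 := by
  have h0 := hv.2 (6*k)
  rw [starDeg_eq k (6*k) o _ (filter_incident_vn k hk)] at h0
  rw [Finset.sum_insert (by simp [Prod.ext_iff]; try omega),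
      Finset.sum_insert (by simp [Prod.ext_iff]; try omega),
      Finset.sum_insert (by simp [Prod.ext_iff]; try omega),
      Finset.sum_singleton] at h0
  rw [term_in o (6*k) (6*k-1,6*k) rfl (by omega),
      term_in o (6*k) (6*k-2,6*k) rfl (by omega),
      term_in o (6*k) (6*k+1,6*k) rfl (by omega),
      term_in o (6*k) (6*k+2,6*k) rfl (by omega)] at h0
  rw [starP_negone k (6*k) (by omega) (by omega)] at h0
  linear_combination h0

lemma rule_t (k : ℕ) (hk : 1 ≤ k) (o : ℕ × ℕ → Bool) (hv : starValid k o) :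
    - starC (o (6*k+2,0)) - starC (o (6*k+2,6*k)) - starC (o (6*k+2,6*k+1)) = 0 := by
  have h0 := hv.2 (6*k+2)
  rw [starDeg_eq k (6*k+2) o _ (filter_incident_t k hk)] at h0
  rw [Finset.sum_insert (by simp [Prod.ext_iff]; try omega),
      Finset.sum_insert (by simp [Prod.ext_iff]; try omega),
      Finset.sum_singleton] at h0
  rw [term_out o (6*k+2) (6*k+2,0) rfl (by omega),
      term_out o (6*k+2) (6*k+2,6*k) rfl (by omega),
      term_out o (6*k+2) (6*k+2,6*k+1) rfl (by omega)] at h0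
  rw [show starP k (6*k+2) = 0 by unfold starP; rw [if_neg (by omega), if_neg (by omega), if_neg (by omega)]] at h0
  linear_combination h0

lemma forceL (a45 a35 a57 a34 a24 a23 a13 : Bool)
    (e1 : starC a45 - starC false + starC a35 - starC a57 = 1)
    (e2 : starC a34 - starC a45 + starC a24 - starC false = 1)
    (e3 : starC a23 - starC a34 + starC a13 - starC a35 = 1) :
    a23 = false ∧ a13 = false := by
  revert a45 a35 a57 a34 a24 a23 a13; decide

lemma forceB (o12 o02 o24 o01 ow1 ow0 ot0 : Bool)
    (e1 : starC o12 - starC false + starC o02 - starC o24 = 1)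
    (e2 : starC o01 - starC o12 - starC false + starC ow1 = 1)
    (e3 : - starC o01 - starC o02 + starC ow0 + starC ot0 = 1) :
    ow0 = false ∧ ot0 = false := by
  revert o12 o02 o24 o01 ow1 ow0 ot0; decide

lemma forceR (b23 b24 b34 b35 b45 b46 : Bool)
    (e1 : starC true - starC b23 + starC false - starC b24 = -1)
    (e2 : starC b23 - starC b34 + starC true - starC b35 = -1)
    (e3 : starC b34 - starC b45 + starC b24 - starC b46 = -1) :
    b45 = true ∧ b46 = true ∧ b35 = false := by
  revert b23 b24 b34 b35 b45 b46; decide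

lemma forceRI (cm1 c12 c13 c23 c24 c34 c35 c45 c46 c56 c57 : Bool)
    (e1 : starC true - starC c12 + starC cm1 - starC c13 = 1)
    (e2 : starC c12 - starC c23 + starC true - starC c24 = 1)
    (e3 : starC c23 - starC c34 + starC c13 - starC c35 = -1)
    (e4 : starC c34 - starC c45 + starC c24 - starC c46 = -1)
    (e5 : starC c45 - starC c56 + starC c35 - starC c57 = -1) :
    (c45 = true ∧ c46 = true ∧ c35 = false) ∨ (c56 = true ∧ c57 = true ∧ c46 = false) := by
  revert cm1 c12 c13 c23 c24 c34 c35 c45 c46 c56 c57; decide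

lemma forceEA (d10 dwm1 dw0 dt0 dtw : Bool)
    (e1 : starC true - starC d10 + starC false + starC dwm1 = -1)
    (e2 : starC d10 + starC true + starC dw0 + starC dt0 = -1)
    (e3 : - starC false - starC dt0 - starC dtw = 0) : False := by
  revert d10 dwm1 dw0 dt0 dtw; decide

lemma forceEB (e32 e31 e21 e20 e10 ewm1 ew0 et0 etw : Bool)
    (e1 : starC true - starC e32 + starC false - starC e31 = -1)
    (e2 : starC e32 - starC e21 + starC true - starC e20 = -1)
    (e3 : starC e21 - starC e10 + starC e31 + starC ewm1 = -1)
    (e4 : starC e10 + starC e20 + starC ew0 + starC et0 = -1)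
    (e5 : - starC false - starC et0 - starC etw = 0) : False := by
  revert e32 e31 e21 e20 e10 ewm1 ew0 et0 etw; decide

lemma forceK1 (f45 f24 f46 f56 f75 f76 f86 f87 : Bool)
    (e1 : starC true - starC f45 + starC f24 - starC f46 = 1)
    (e2 : starC f45 - starC f56 + starC true + starC f75 = 1)
    (e3 : starC f56 + starC f46 + starC f76 + starC f86 = -1)
    (e4 : - starC false - starC f86 - starC f87 = 0) : False := by
  revert f45 f24 f46 f56 f75 f76 f86 f87; decide

lemma forceK2 (g78 g57 g79 g89 g810 g910 g911 g1011 g1012 g1112 g1311 g1312 g1412 g1413 : Bool)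
    (e1 : starC true - starC g78 + starC g57 - starC g79 = 1)
    (e2 : starC g78 - starC g89 + starC true - starC g810 = 1)
    (e3 : starC g89 - starC g910 + starC g79 - starC g911 = -1)
    (e4 : starC g910 - starC g1011 + starC g810 - starC g1012 = -1)
    (e5 : starC g1011 - starC g1112 + starC g911 + starC g1311 = -1)
    (e6 : starC g1112 + starC g1012 + starC g1312 + starC g1412 = -1)
    (e7 : - starC false - starC g1412 - starC g1413 = 0) : False := by
  revert g78 g57 g79 g89 g810 g910 g911 g1011 g1012 g1112 g1311 g1312 g1412 g1413; decide

def starRS (o : ℕ × ℕ → Bool) (r : ℕ) : Prop :=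
  o (r+1, r+2) = true ∧ o (r+1, r+3) = true ∧ o (r, r+2) = false

lemma stepL (k s : ℕ) (h : s + 6 ≤ 3*k) (o : ℕ × ℕ → Bool) (hv : starValid k o)
    (h1 : o (s+5, s+6) = false) (h2 : o (s+4, s+6) = false) :
    o (s+2, s+3) = false ∧ o (s+1, s+3) = false := by
  have e1 := rule_int k (s+3) (by omega) o hv
  have e2 := rule_int k (s+2) (by omega) o hv
  have e3 := rule_int k (s+1) (by omega) o hv
  simp only [add_assoc, Nat.reduceAdd] at e1 e2 e3
  rw [starP_one k (s+5) (by omega) (by omega), h1] at e1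
  rw [starP_one k (s+4) (by omega) (by omega), h2] at e2
  rw [starP_one k (s+3) (by omega) (by omega)] at e3
  exact forceL (o (s+4,s+5)) (o (s+3,s+5)) (o (s+5,s+7)) (o (s+3,s+4)) (o (s+2,s+4))
    (o (s+2,s+3)) (o (s+1,s+3)) e1 e2 e3

lemma bottomL (k : ℕ) (hk : 1 ≤ k) (o : ℕ × ℕ → Bool) (hv : starValid k o)
    (h1 : o (2,3) = false) (h2 : o (1,3) = false) :
    o (6*k+1, 0) = false ∧ o (6*k+2, 0) = false := by
  have e1 := rule_int k 0 (by omega) o hv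
  have e2 := rule_v1 k hk o hv
  have e3 := rule_v0 k hk o hv
  simp only [Nat.reduceAdd, Nat.zero_add, zero_add] at e1
  rw [starP_one k 2 (by omega) (by omega), h1] at e1
  rw [h2] at e2
  exact forceB (o (1,2)) (o (0,2)) (o (2,4)) (o (0,1)) (o (6*k+1,1)) (o (6*k+1,0))
    (o (6*k+2,0)) e1 e2 e3

lemma rightStep (k r : ℕ) (hr : 3*k+3 ≤ r) (hr2 : r + 6 ≤ 6*k) (o : ℕ × ℕ → Bool)
    (hv : starValid k o) (hRS : starRS o r) : starRS o (r+3) := by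
  obtain ⟨k1, k2, k3⟩ := hRS
  have e1 := rule_int k r (by omega) o hv
  have e2 := rule_int k (r+1) (by omega) o hv
  have e3 := rule_int k (r+2) (by omega) o hv
  simp only [add_assoc, Nat.reduceAdd] at e1 e2 e3
  rw [starP_negone k (r+2) (by omega) (by omega), k1, k3] at e1
  rw [starP_negone k (r+3) (by omega) (by omega), k2] at e2
  rw [starP_negone k (r+4) (by omega) (by omega)] at e3
  have := forceR (o (r+2,r+3)) (o (r+2,r+4)) (o (r+3,r+4)) (o (r+3,r+5)) (o (r+4,r+5))
    (o (r+4,r+6)) e1 e2 e3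
  unfold starRS
  simp only [add_assoc, Nat.reduceAdd]
  exact ⟨this.1, this.2.1, this.2.2⟩

lemma starRS_chain (k : ℕ) (o : ℕ × ℕ → Bool) (hv : starValid k o) :
    ∀ i r, 3*k+3 ≤ r → r + 3*i + 3 ≤ 6*k → starRS o r → starRS o (r + 3*i) := by
  intro i
  induction i with
  | zero => intro r _ _ h; simpa using h
  | succ n ih =>
      intro r h1 h2 h
      have h3 := rightStep k r h1 (by omega) o hv h
      have h4 := ih (r+3) (by omega) (by omega) h3
      rw [show r + 3*(n+1) = r + 3 + 3*n by ring]
      exact h4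

lemma rightInit (k : ℕ) (hk3 : 3 ≤ k) (o : ℕ × ℕ → Bool) (hv : starValid k o)
    (hd1 : o (3*k, 3*k+1) = true) (hd2 : o (3*k, 3*k+2) = true) :
    starRS o (3*k+3) ∨ starRS o (3*k+4) := by
  have e1 := rule_int k (3*k-1) (by omega) o hv
  have e2 := rule_int k (3*k) (by omega) o hv
  have e3 := rule_int k (3*k+1) (by omega) o hv
  have e4 := rule_int k (3*k+2) (by omega) o hv
  have e5 := rule_int k (3*k+3) (by omega) o hv
  rw [show 3*k-1+1 = 3*k by omega, show 3*k-1+2 = 3*k+1 by omega,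
      show 3*k-1+3 = 3*k+2 by omega, show 3*k-1+4 = 3*k+3 by omega] at e1
  simp only [add_assoc, Nat.reduceAdd] at e1 e2 e3 e4 e5
  rw [starP_one k (3*k+1) (by omega) (by omega), hd1] at e1
  rw [starP_one k (3*k+2) (by omega) (by omega), hd2] at e2
  rw [starP_negone k (3*k+3) (by omega) (by omega)] at e3
  rw [starP_negone k (3*k+4) (by omega) (by omega)] at e4
  rw [starP_negone k (3*k+5) (by omega) (by omega)] at e5
  have := forceRI (o (3*k-1,3*k+1)) (o (3*k+1,3*k+2)) (o (3*k+1,3*k+3)) (o (3*k+2,3*k+3))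
    (o (3*k+2,3*k+4)) (o (3*k+3,3*k+4)) (o (3*k+3,3*k+5)) (o (3*k+4,3*k+5))
    (o (3*k+4,3*k+6)) (o (3*k+5,3*k+6)) (o (3*k+5,3*k+7)) e1 e2 e3 e4 e5
  unfold starRS
  simp only [add_assoc, Nat.reduceAdd]
  tauto

lemma endA (k : ℕ) (hk2 : 2 ≤ k) (o : ℕ × ℕ → Bool) (hv : starValid k o)
    (hRS : starRS o (6*k-3)) (ht0 : o (6*k+2, 0) = false) : False := by
  obtain ⟨k1, k2, k3⟩ := hRS
  rw [show 6*k-3+1 = 6*k-2 by omega, show 6*k-3+2 = 6*k-1 by omega] at k1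
  rw [show 6*k-3+1 = 6*k-2 by omega, show 6*k-3+3 = 6*k by omega] at k2
  rw [show 6*k-3+2 = 6*k-1 by omega] at k3
  have e1 := rule_vn1 k (by omega) o hv
  have e2 := rule_vn k (by omega) o hv
  have e3 := rule_t k (by omega) o hv
  rw [starP_negone k (6*k-1) (by omega) (by omega), k1, k3] at e1
  rw [k2] at e2
  rw [ht0] at e3
  exact forceEA (o (6*k-1,6*k)) (o (6*k+1,6*k-1)) (o (6*k+1,6*k)) (o (6*k+2,6*k))
    (o (6*k+2,6*k+1)) e1 e2 e3

lemma endB (k : ℕ) (hk3 : 3 ≤ k) (o : ℕ × ℕ → Bool) (hv : starValid k o)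
    (hRS : starRS o (6*k-5)) (ht0 : o (6*k+2, 0) = false) : False := by
  obtain ⟨k1, k2, k3⟩ := hRS
  rw [show 6*k-5+1 = 6*k-4 by omega, show 6*k-5+2 = 6*k-3 by omega] at k1
  rw [show 6*k-5+1 = 6*k-4 by omega, show 6*k-5+3 = 6*k-2 by omega] at k2
  rw [show 6*k-5+2 = 6*k-3 by omega] at k3
  have e1 := rule_int k (6*k-5) (by omega) o hv
  have e2 := rule_int k (6*k-4) (by omega) o hv
  rw [show 6*k-5+1 = 6*k-4 by omega, show 6*k-5+2 = 6*k-3 by omega,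
      show 6*k-5+3 = 6*k-2 by omega, show 6*k-5+4 = 6*k-1 by omega] at e1
  rw [show 6*k-4+1 = 6*k-3 by omega, show 6*k-4+2 = 6*k-2 by omega,
      show 6*k-4+3 = 6*k-1 by omega, show 6*k-4+4 = 6*k by omega] at e2
  have e3 := rule_vn1 k (by omega) o hv
  have e4 := rule_vn k (by omega) o hv
  have e5 := rule_t k (by omega) o hv
  rw [starP_negone k (6*k-3) (by omega) (by omega), k1, k3] at e1
  rw [starP_negone k (6*k-2) (by omega) (by omega), k2] at e2
  rw [starP_negone k (6*k-1) (by omega) (by omega)] at e3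
  rw [ht0] at e5
  exact forceEB (o (6*k-3,6*k-2)) (o (6*k-3,6*k-1)) (o (6*k-2,6*k-1)) (o (6*k-2,6*k))
    (o (6*k-1,6*k)) (o (6*k+1,6*k-1)) (o (6*k+1,6*k)) (o (6*k+2,6*k)) (o (6*k+2,6*k+1))
    e1 e2 e3 e4 e5

lemma kOne (o : ℕ × ℕ → Bool) (hv : starValid 1 o)
    (hd1 : o (3, 4) = true) (hd2 : o (3, 5) = true) (ht0 : o (8, 0) = false) : False := by
  have e1 := rule_int 1 2 (by omega) o hv
  have e2 := rule_vn1 1 (by omega) o hv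
  have e3 := rule_vn 1 (by omega) o hv
  have e4 := rule_t 1 (by omega) o hv
  norm_num at e1 e2 e3 e4
  rw [starP_one 1 4 (by omega) (by omega), hd1] at e1
  rw [starP_one 1 5 (by omega) (by omega), hd2] at e2
  rw [ht0] at e4
  exact forceK1 (o (4,5)) (o (2,4)) (o (4,6)) (o (5,6)) (o (7,5)) (o (7,6)) (o (8,6))
    (o (8,7)) e1 e2 e3 e4

lemma kTwo (o : ℕ × ℕ → Bool) (hv : starValid 2 o)
    (hd1 : o (6, 7) = true) (hd2 : o (6, 8) = true) (ht0 : o (14, 0) = false) : False := by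
  have e1 := rule_int 2 5 (by omega) o hv
  have e2 := rule_int 2 6 (by omega) o hv
  have e3 := rule_int 2 7 (by omega) o hv
  have e4 := rule_int 2 8 (by omega) o hv
  have e5 := rule_vn1 2 (by omega) o hv
  have e6 := rule_vn 2 (by omega) o hv
  have e7 := rule_t 2 (by omega) o hv
  norm_num at e1 e2 e3 e4 e5 e6 e7
  rw [starP_one 2 7 (by omega) (by omega), hd1] at e1
  rw [starP_one 2 8 (by omega) (by omega), hd2] at e2
  rw [starP_negone 2 9 (by omega) (by omega)] at e3
  rw [starP_negone 2 10 (by omega) (by omega)] at e4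
  rw [starP_negone 2 11 (by omega) (by omega)] at e5
  rw [ht0] at e7
  exact forceK2 (o (7,8)) (o (5,7)) (o (7,9)) (o (8,9)) (o (8,10)) (o (9,10)) (o (9,11))
    (o (10,11)) (o (10,12)) (o (11,12)) (o (13,11)) (o (13,12)) (o (14,12)) (o (14,13))
    e1 e2 e3 e4 e5 e6 e7

/-- In any valid orientation of the graph of Lemma `star`, for all `0 ≤ j ≤ k` the edges
`v_{3(k−j)} v_{3(k−j)−1}` and `v_{3(k−j)} v_{3(k−j)−2}` are directed out of `v_{3(k−j)}`;
consequently the graph has no valid orientation meeting `p`. -/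
theorem stmt10 (k : ℕ) (hk : 1 ≤ k) :
    (∀ o : ℕ × ℕ → Bool, starValid k o → ∀ j ≤ k,
        o (starPairA k (3 * (k - j))) = false ∧ o (starPairB k (3 * (k - j))) = false) ∧
    ¬ ∃ o : ℕ × ℕ → Bool, starValid k o := by
  have main : ∀ o : ℕ × ℕ → Bool, starValid k o → ∀ j, j ≤ k →
      o (starPairA k (3 * (k - j))) = false ∧ o (starPairB k (3 * (k - j))) = false := by
    intro o hv j
    induction j with
    | zero =>
      intro _
      rw [Nat.sub_zero]
      unfold starPairA starPairB
      rw [if_neg (by omega), if_neg (by omega)]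
      refine ⟨(hv.1 (3*k-1, 3*k) ?_).2 rfl, (hv.1 (3*k-2, 3*k) ?_).2 rfl⟩
      · exact (mem_starPairs' _ _).mpr (Or.inl ⟨by omega, by omega⟩)
      · exact (mem_starPairs' _ _).mpr (Or.inr (Or.inl ⟨by omega, by omega⟩))
    | succ n ih =>
      intro hn1
      have Hn := ih (by omega)
      by_cases hc : k - n = 1
      · rw [show 3 * (k - (n+1)) = 0 by omega]
        rw [show 3 * (k - n) = 3 by omega] at Hn
        unfold starPairA starPairB at Hn ⊢
        rw [if_pos rfl, if_pos rfl]
        rw [if_neg (by omega), if_neg (by omega)] at Hn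
        norm_num at Hn
        exact bottomL k hk o hv Hn.1 Hn.2
      · obtain ⟨s, hs⟩ : ∃ s, 3 * (k - n) = s + 6 := ⟨3*(k-n) - 6, by omega⟩
        rw [hs] at Hn
        unfold starPairA starPairB at Hn
        rw [if_neg (by omega), if_neg (by omega)] at Hn
        rw [show s+6-1 = s+5 by omega, show s+6-2 = s+4 by omega] at Hn
        have hst := stepL k s (by omega) o hv Hn.1 Hn.2
        rw [show 3 * (k - (n+1)) = s + 3 by omega]
        unfold starPairA starPairB
        rw [if_neg (by omega), if_neg (by omega)]
        rw [show s+3-1 = s+2 by omega, show s+3-2 = s+1 by omega]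
        exact hst
  refine ⟨main, ?_⟩
  rintro ⟨o, hv⟩
  have ht0 : o (6*k+2, 0) = false := by
    have h := (main o hv k le_rfl).2
    rw [show 3 * (k - k) = 0 by omega] at h
    unfold starPairB at h
    rw [if_pos rfl] at h
    exact h
  have hm1 : (3*k, 3*k+1) ∈ starPairs k := (mem_starPairs' _ _).mpr (Or.inl ⟨by omega, rfl⟩)
  have hm2 : (3*k, 3*k+2) ∈ starPairs k :=
    (mem_starPairs' _ _).mpr (Or.inr (Or.inl ⟨by omega, rfl⟩))
  have hd1 : o (3*k, 3*k+1) = true := (hv.1 _ hm1).1 rfl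
  have hd2 : o (3*k, 3*k+2) = true := (hv.1 _ hm2).1 rfl
  rcases Nat.lt_or_ge k 3 with hlt | hge
  · interval_cases k
    · norm_num at hd1 hd2 ht0
      exact kOne o hv hd1 hd2 ht0
    · norm_num at hd1 hd2 ht0
      exact kTwo o hv hd1 hd2 ht0
  · rcases rightInit k hge o hv hd1 hd2 with hA | hB
    · have hc := starRS_chain k o hv (k-2) (3*k+3) (by omega) (by omega) hA
      rw [show 3*k+3 + 3*(k-2) = 6*k-3 by omega] at hc
      exact endA k (by omega) o hv hc ht0
    · have hc := starRS_chain k o hv (k-3) (3*k+4) (by omega) (by omega) hB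
      rw [show 3*k+4 + 3*(k-3) = 6*k-5 by omega] at hc
      exact endB k hge o hv hc ht0
end

section
/- Deleting a vertex x on the boundary of the specified face preserves the edge-disjoint-paths condition: if every vertex of G not on the boundary of face F_G has 5 edge-disjoint paths to the boundary of F_G, and G' = G − x for a boundary vertex x (with F_{G'} the merged face), then every vertex of G' not on the boundary of F_{G'} has 5 edge-disjoint paths to the boundary of F_{G'}. -/
open Finset

/-- `G` has 5 pairwise edge-disjoint paths (walks) from `v` to the vertex set `B`. -/
def FiveEdgeDisjointPaths {V : Type} (G : SimpleGraph V) (v : V) (B : Set V) : Prop :=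
  ∃ (b : Fin 5 → V) (w : ∀ i, G.Walk v (b i)),
    (∀ i, b i ∈ B) ∧ ∀ i j, i ≠ j → ∀ e, e ∈ (w i).edges → e ∉ (w j).edges

/-- Truncation lemma: any walk ending in `B' ∪ {x}` starting at a vertex `≠ x` can be
truncated to a walk in the edge-deleted graph ending in `B'`, with a subset of edges. -/
lemma truncate_aux {V : Type} (G : SimpleGraph V) (x : V) (B' : Set V)
    (hB'2 : ∀ u, G.Adj x u → u ∈ B') :
    ∀ {v u : V} (w : G.Walk v u), v ≠ x → (u ∈ B' ∨ u = x) →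
      ∃ (b : V) (w' : (G.deleteEdges {e : Sym2 V | x ∈ e}).Walk v b),
        b ∈ B' ∧ ∀ e, e ∈ w'.edges → e ∈ w.edges := by
  intro v u w
  induction w with
  | nil =>
      intro hv hu
      rcases hu with hu | hu
      · exact ⟨_, SimpleGraph.Walk.nil, hu, by simp⟩
      · exact absurd hu hv
  | @cons a c u hac rest ih =>
      intro hv hu
      by_cases hvB : a ∈ B'
      · exact ⟨a, SimpleGraph.Walk.nil, hvB, by simp⟩
      · have hcx : c ≠ x := by
          rintro rfl
          exact hvB (hB'2 a hac.symm)
        obtain ⟨b, w', hb, hsub⟩ := ih hcx hu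
        have hadj : (G.deleteEdges {e : Sym2 V | x ∈ e}).Adj a c := by
          rw [SimpleGraph.deleteEdges_adj]
          refine ⟨hac, ?_⟩
          simp only [Set.mem_setOf_eq, Sym2.mem_iff]
          rintro (rfl | rfl)
          · exact hv rfl
          · exact hcx rfl
        refine ⟨b, SimpleGraph.Walk.cons hadj w', hb, ?_⟩
        intro e he
        simp only [SimpleGraph.Walk.edges_cons, List.mem_cons] at he ⊢
        rcases he with rfl | he
        · exact Or.inl rfl
        · exact Or.inr (hsub e he)

/-- Deleting a boundary vertex `x` preserves the edge-disjoint-paths condition: if every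
vertex of `G` not on the boundary `B` of the specified face has 5 edge-disjoint paths to
`B`, and `G' = G − x` (realised by deleting the edges at `x`), whose specified face has
boundary `B'` (the merge of `B ∖ {x}` with the boundaries of the faces incident with `x`,
so `B'` contains `B ∖ {x}` and all neighbours of `x`), then every vertex of `G'` not on
`B'` has 5 edge-disjoint paths to `B'` in `G'`. -/
theorem stmt16 {V : Type} (G : SimpleGraph V) (B : Set V) (x : V) (hxB : x ∈ B)
    (hpaths : ∀ v : V, v ∉ B → FiveEdgeDisjointPaths G v B)
    (B' : Set V) (hB'1 : B \ {x} ⊆ B') (hB'2 : ∀ u, G.Adj x u → u ∈ B')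
    (hB'x : x ∉ B') :
    ∀ v : V, v ∉ B' → v ≠ x →
      FiveEdgeDisjointPaths (G.deleteEdges {e : Sym2 V | x ∈ e}) v B' := by
  intro v hvB' hvx
  have hvB : v ∉ B := fun h => hvB' (hB'1 ⟨h, hvx⟩)
  obtain ⟨b, w, hbB, hdisj⟩ := hpaths v hvB
  have key : ∀ i, ∃ (c : V) (w' : (G.deleteEdges {e : Sym2 V | x ∈ e}).Walk v c),
      c ∈ B' ∧ ∀ e, e ∈ w'.edges → e ∈ (w i).edges := by
    intro i
    apply truncate_aux G x B' hB'2 (w i) hvx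
    by_cases hbx : b i = x
    · exact Or.inr hbx
    · exact Or.inl (hB'1 ⟨hbB i, hbx⟩)
  choose c w' hc hsub using key
  refine ⟨c, w', hc, ?_⟩
  intro i j hij e hei hej
  exact hdisj i j hij e (hsub i e hei) (hsub j e hej)
end

section
/- If G is a graph with a valid prescription p and a 2-robust edge-cut δ(A) of size 3, and both the contraction G/(V\A) and the contraction G/A (with the vertex of contraction directed according to the orientation obtained on δ(A)) have valid orientations, then G has a valid orientation. Hence the class of graphs with valid orientations is closed under gluing along 3-edge-cuts. -/
open Finset

/-- Gluing along a 2-robust 3-edge-cut: if the contraction `G/(V∖A)` has a valid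
orientation, and for any such orientation the contraction `G/A` (whose contracted degree-3
vertex is directed according to the directions obtained on `δ(A)`) has a valid orientation
extending those directions, then `G` has a valid orientation. -/
theorem stmt17 {V E : Type} [Fintype V] [Fintype E] [DecidableEq V]
    (fst snd : E → V) (p : V → ZMod 3) (hp : ∑ v, p v = 0)
    (A : Finset V) (hrobust : 2 ≤ A.card ∧ 2 ≤ (univ \ A).card)
    (hcut : (cutset fst snd A).card = 3)
    (h1 : ∃ o1 : E → Bool, ∀ v ∈ A, flowDiff fst snd o1 v = p v)
    (h2 : ∀ o1 : E → Bool, (∀ v ∈ A, flowDiff fst snd o1 v = p v) →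
      ∃ o2 : E → Bool, (∀ e ∈ cutset fst snd A, o2 e = o1 e) ∧
        ∀ v ∉ A, flowDiff fst snd o2 v = p v) :
    ∃ o : E → Bool, ∀ v, flowDiff fst snd o v = p v := by
  classical
  obtain ⟨o1, ho1⟩ := h1
  obtain ⟨o2, hcuteq, ho2⟩ := h2 o1 ho1
  set o : E → Bool := fun e => if fst e ∈ A ∨ snd e ∈ A then o1 e else o2 e with hodef
  have hoeq : ∀ (o' : E → Bool) (e : E),
      edgeHead fst snd o' e = fst e ∨ edgeHead fst snd o' e = snd e := by
    intro o' e; unfold edgeHead; split <;> simp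
  have hteq : ∀ (o' : E → Bool) (e : E),
      edgeTail fst snd o' e = fst e ∨ edgeTail fst snd o' e = snd e := by
    intro o' e; unfold edgeTail; split <;> simp
  refine ⟨o, fun v => ?_⟩
  by_cases hv : v ∈ A
  · have key : ∀ e : E, o e = o1 e ∨ (fst e ∉ A ∧ snd e ∉ A) := by
      intro e
      by_cases h : fst e ∈ A ∨ snd e ∈ A
      · left; simp [hodef, h]
      · right; push_neg at h; exact h
    have hH : ∀ e ∈ (univ : Finset E),
        (edgeHead fst snd o e = v ↔ edgeHead fst snd o1 e = v) := by
      intro e _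
      rcases key e with h | ⟨h1', h2'⟩
      · unfold edgeHead; rw [h]
      · constructor <;> intro hh
        · exfalso; rcases hoeq o e with h' | h' <;> rw [h'] at hh <;> subst hh
          · exact h1' hv
          · exact h2' hv
        · exfalso; rcases hoeq o1 e with h' | h' <;> rw [h'] at hh <;> subst hh
          · exact h1' hv
          · exact h2' hv
    have hT : ∀ e ∈ (univ : Finset E),
        (edgeTail fst snd o e = v ↔ edgeTail fst snd o1 e = v) := by
      intro e _
      rcases key e with h | ⟨h1', h2'⟩
      · unfold edgeTail; rw [h]
      · constructor <;> intro hh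
        · exfalso; rcases hteq o e with h' | h' <;> rw [h'] at hh <;> subst hh
          · exact h1' hv
          · exact h2' hv
        · exfalso; rcases hteq o1 e with h' | h' <;> rw [h'] at hh <;> subst hh
          · exact h1' hv
          · exact h2' hv
    unfold flowDiff
    rw [filter_congr hH, filter_congr hT]
    exact ho1 v hv
  · have key : ∀ e : E, o e = o2 e ∨ (fst e ∈ A ∧ snd e ∈ A) := by
      intro e
      by_cases h : fst e ∈ A ∨ snd e ∈ A
      · by_cases hc : (fst e ∈ A ↔ snd e ∈ A)
        · right; rcases h with h | h
          · exact ⟨h, hc.mp h⟩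
          · exact ⟨hc.mpr h, h⟩
        · left
          have : e ∈ cutset fst snd A := by simp [cutset, hc]
          simp [hodef, h, hcuteq e this]
      · left; simp [hodef, h]
    have hH : ∀ e ∈ (univ : Finset E),
        (edgeHead fst snd o e = v ↔ edgeHead fst snd o2 e = v) := by
      intro e _
      rcases key e with h | ⟨h1', h2'⟩
      · unfold edgeHead; rw [h]
      · constructor <;> intro hh
        · exfalso; rcases hoeq o e with h' | h' <;> rw [h'] at hh <;> subst hh
          · exact hv h1'
          · exact hv h2'
        · exfalso; rcases hoeq o2 e with h' | h' <;> rw [h'] at hh <;> subst hh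
          · exact hv h1'
          · exact hv h2'
    have hT : ∀ e ∈ (univ : Finset E),
        (edgeTail fst snd o e = v ↔ edgeTail fst snd o2 e = v) := by
      intro e _
      rcases key e with h | ⟨h1', h2'⟩
      · unfold edgeTail; rw [h]
      · constructor <;> intro hh
        · exfalso; rcases hteq o e with h' | h' <;> rw [h'] at hh <;> subst hh
          · exact hv h1'
          · exact hv h2'
        · exfalso; rcases hteq o2 e with h' | h' <;> rw [h'] at hh <;> subst hh
          · exact hv h1'
          · exact hv h2'
    unfold flowDiff
    rw [filter_congr hH, filter_congr hT]
    exact ho2 v hv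
end
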